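/- arXiv:1311.6231 — 4 statements merged into one kernel-verified Lean document; each statement's English description precedes it below -/
import Mathlib

section
/- The 2×2 matrix N with entries N₁₁ = t - i z, N₁₂ = -i x - y, N₂₁ = -i x + y, N₂₂ = t + i z, where x, y, z, t are elements of the universal enveloping algebra U(u(2)_h) satisfying [x,y] = h z, [y,z] = h x, [z,x] = h y and t central, satisfies the Cayley-Hamilton identity N² - (2t + h)·N + (t² + x² + y² + z² + h t)·I = 0. -/
/-- The generating matrix `N` of `U(u(2)_h)` satisfies the Cayley-Hamilton identity
`N² - (2t + h)·N + (t² + x² + y² + z² + h t)·I = 0`. -/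
theorem stmt_0 {A : Type*} [Ring A] [Algebra ℂ A] (h : ℂ) (x y z t : A)
    (hxy : x * y - y * x = algebraMap ℂ A h * z)
    (hyz : y * z - z * y = algebraMap ℂ A h * x)
    (hzx : z * x - x * z = algebraMap ℂ A h * y)
    (htx : Commute t x) (hty : Commute t y) (htz : Commute t z) :
    let I : A := algebraMap ℂ A Complex.I
    let N : Matrix (Fin 2) (Fin 2) A :=
      !![t - I * z, -(I * x) - y; -(I * x) + y, t + I * z]
    N ^ 2 - Matrix.scalar (Fin 2) (2 * t + algebraMap ℂ A h) * N
      + Matrix.scalar (Fin 2) (t ^ 2 + x ^ 2 + y ^ 2 + z ^ 2 + algebraMap ℂ A h * t) = 0 := by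
  intro I N
  have hyx : y * x = x * y - h • z := by
    rw [← Algebra.smul_def] at hxy; linear_combination (norm := abel) -hxy
  have hzy : z * y = y * z - h • x := by
    rw [← Algebra.smul_def] at hyz; linear_combination (norm := abel) -hyz
  have hzx' : z * x = x * z + h • y := by
    rw [← Algebra.smul_def] at hzx; linear_combination (norm := abel) hzx
  have hxt : x * t = t * x := htx.symm.eq
  have hyt : y * t = t * y := hty.symm.eq
  have hzt : z * t = t * z := htz.symm.eq
  have hI : I = Complex.I • (1 : A) := by simp [I, Algebra.smul_def]
  simp only [N]
  ext i j
  rw [pow_two]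
  fin_cases i <;> fin_cases j <;>
    simp only [Matrix.sub_apply, Matrix.add_apply, Matrix.mul_apply, Fin.sum_univ_two,
      Matrix.scalar_apply, Matrix.diagonal_apply, Matrix.zero_apply, Matrix.of_apply,
      Matrix.cons_val', Matrix.cons_val_zero, Matrix.cons_val_one, Matrix.head_cons,
      Matrix.empty_val', Matrix.cons_val_fin_one, Matrix.head_fin_const,
      Fin.zero_eta, Fin.mk_one, one_ne_zero, zero_ne_one, if_true, if_false,
      reduceIte, zero_mul, add_zero, zero_add, hI] <;>
    (simp only [smul_mul_assoc, one_mul, mul_smul_comm, mul_one, two_mul, mul_sub, sub_mul, mul_add,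
      add_mul, neg_mul, mul_neg, pow_two, smul_smul, Complex.I_mul_I, neg_smul, one_smul,
      smul_sub, smul_add, smul_neg, ← Algebra.smul_def, hyx, hzy, hzx', hxt, hyt, hzt];
     match_scalars <;>
       first
       | ring1
       | linear_combination h * Complex.I_sq
       | linear_combination -h * Complex.I_sq)
end

section
/- Let ξ = 1 + ħE and η = ħp + √(1+(ħp)²) with ħ, E, p real, ħ ≠ 0, ξ > 0. If E and p satisfy the quantum dispersion relation (ξ·(η-1)²/(2ħη) + E)² - ξ²p² + m² = 0, then E² - 2p²(1+ħE)/(1+√(1+(ħp)²)) + m² = 0; conversely, the solutions in E of this equation are E± = ±√(p² - m²) + ħp²/(1 + √(1+(ħp)²)) (assuming p² ≥ m²). -/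
/-- The quantum dispersion relation for the NC Klein-Gordon plane wave implies the
simplified relation `E² - 2p²(1+ħE)/(1+√(1+(ħp)²)) + m² = 0`, whose solutions in `E`
are `E± = ±√(p² - m²) + ħp²/(1 + √(1+(ħp)²))`. -/
theorem stmt_11 (hb E p m : ℝ) (hhb : hb ≠ 0) (hξ : 0 < 1 + hb * E) :
    let ξ : ℝ := 1 + hb * E
    let η : ℝ := hb * p + Real.sqrt (1 + (hb * p) ^ 2)
    ((ξ * (η - 1) ^ 2 / (2 * hb * η) + E) ^ 2 - ξ ^ 2 * p ^ 2 + m ^ 2 = 0 →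
      E ^ 2 - 2 * p ^ 2 * (1 + hb * E) / (1 + Real.sqrt (1 + (hb * p) ^ 2)) + m ^ 2 = 0) ∧
    (m ^ 2 ≤ p ^ 2 →
      (E ^ 2 - 2 * p ^ 2 * (1 + hb * E) / (1 + Real.sqrt (1 + (hb * p) ^ 2)) + m ^ 2 = 0 ↔
        E = Real.sqrt (p ^ 2 - m ^ 2) + hb * p ^ 2 / (1 + Real.sqrt (1 + (hb * p) ^ 2)) ∨
        E = -Real.sqrt (p ^ 2 - m ^ 2) + hb * p ^ 2 / (1 + Real.sqrt (1 + (hb * p) ^ 2)))) := by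
  intro ξ η
  rw [show ξ = 1 + hb * E from rfl, show η = hb * p + Real.sqrt (1 + (hb * p) ^ 2) from rfl]
  set s : ℝ := Real.sqrt (1 + (hb * p) ^ 2) with hsdef
  have hs0 : (0:ℝ) ≤ 1 + (hb * p) ^ 2 := by positivity
  have hs2 : s ^ 2 = 1 + (hb * p) ^ 2 := Real.sq_sqrt hs0
  have hsnn : 0 ≤ s := Real.sqrt_nonneg _
  have hs1 : 1 ≤ s := by nlinarith
  have hsp : (0:ℝ) < 1 + s := by linarith
  have hspne : (1:ℝ) + s ≠ 0 := ne_of_gt hsp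
  have hηpos : 0 < hb * p + s := by
    nlinarith [sq_nonneg (s - hb * p), sq_nonneg (s + hb * p)]
  have hηne : hb * p + s ≠ 0 := ne_of_gt hηpos
  have key : (1 + hb * E) * (hb * p + s - 1) ^ 2 / (2 * hb * (hb * p + s)) + E
      = ((1 + hb * E) * s - 1) / hb := by
    have h2 : (hb * p + s - 1) ^ 2 = 2 * (hb * p + s) * (s - 1) := by
      linear_combination -hs2
    rw [h2]
    field_simp
    ring
  constructor
  · intro h
    rw [key] at h
    rw [div_pow, div_sub' (pow_ne_zero 2 hhb), div_add' _ _ _ (pow_ne_zero 2 hhb),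
      div_eq_zero_iff] at h
    rcases h with h | h
    · have central : (1 + hb * E) ^ 2 - 2 * (1 + hb * E) * s + 1 + hb ^ 2 * m ^ 2 = 0 := by
        linear_combination h - (1 + hb * E) ^ 2 * hs2
      have hG : hb ^ 2 * ((E ^ 2 + m ^ 2) * (1 + s) - 2 * p ^ 2 * (1 + hb * E)) = 0 := by
        linear_combination (1 + s) * central + 2 * (1 + hb * E) * hs2
      have hG0 : (E ^ 2 + m ^ 2) * (1 + s) - 2 * p ^ 2 * (1 + hb * E) = 0 :=
        (mul_eq_zero.mp hG).resolve_left (pow_ne_zero 2 hhb)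
      field_simp
      linear_combination hG0
    · exact absurd h (pow_ne_zero 2 hhb)
  · intro hm
    set r : ℝ := Real.sqrt (p ^ 2 - m ^ 2) with hrdef
    have hr2 : r ^ 2 = p ^ 2 - m ^ 2 := Real.sq_sqrt (by linarith)
    have hC : (hb * p ^ 2 / (1 + s)) ^ 2 + 2 * p ^ 2 / (1 + s) = p ^ 2 := by
      field_simp
      linear_combination (-(p ^ 2)) * hs2
    constructor
    · intro h
      have hfac : (E - (r + hb * p ^ 2 / (1 + s))) * (E - (-r + hb * p ^ 2 / (1 + s))) = 0 := by
        have h2 : E ^ 2 - 2 * p ^ 2 / (1 + s) - 2 * (hb * p ^ 2 / (1 + s)) * E + m ^ 2 = 0 := by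
          rw [← h]; field_simp; ring
        linear_combination h2 + hC - hr2
      rcases mul_eq_zero.mp hfac with h' | h'
      · left; linarith [sub_eq_zero.mp h']
      · right; linarith [sub_eq_zero.mp h']
    · intro h
      have h2 : E ^ 2 - 2 * p ^ 2 / (1 + s) - 2 * (hb * p ^ 2 / (1 + s)) * E + m ^ 2 = 0 := by
        rcases h with h | h
        · rw [h]; linear_combination hr2 - hC
        · rw [h]; linear_combination hr2 - hC
      rw [← h2]; field_simp; ring
end

section
/- In the quantum Schrödinger ground state problem, the substitution φ(r) = e^{-σr} into the radial equation aEφ(r) + aξ·(φ(r+ħ)(r+ħ) + φ(r-ħ)(r-ħ) - 2rφ(r))/(2ħr) + bξ²·((φ(r+2ħ)-φ(r-2ħ))/(2ħr) + (φ(r+2ħ)+φ(r-2ħ)-2φ(r))/(4ħ²)) + (q/r)φ(r) = 0 holds for all r ≠ 0 if and only if the pair of relations aE + (2aξ/ħ)sinh²(σħ/2) + (bξ²/ħ²)sinh²(σħ) = 0 and aξ·sinh(σħ) + (bξ²/ħ)sinh(2σħ) - q = 0 both hold. -/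
lemma key13 (a b q E σ hb ξ r : ℝ) (hhb : hb ≠ 0) (hr : r ≠ 0) :
    a * E * Real.exp (-σ * r)
      + a * ξ * (Real.exp (-σ * (r + hb)) * (r + hb) + Real.exp (-σ * (r - hb)) * (r - hb)
          - 2 * r * Real.exp (-σ * r)) / (2 * hb * r)
      + b * ξ ^ 2 * ((Real.exp (-σ * (r + 2 * hb)) - Real.exp (-σ * (r - 2 * hb))) / (2 * hb * r)
          + (Real.exp (-σ * (r + 2 * hb)) + Real.exp (-σ * (r - 2 * hb))
              - 2 * Real.exp (-σ * r)) / (4 * hb ^ 2))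
      + (q / r) * Real.exp (-σ * r)
    = Real.exp (-σ * r) * ((a * E + (2 * a * ξ / hb) * Real.sinh (σ * hb / 2) ^ 2
        + (b * ξ ^ 2 / hb ^ 2) * Real.sinh (σ * hb) ^ 2)
      - (a * ξ * Real.sinh (σ * hb) + (b * ξ ^ 2 / hb) * Real.sinh (2 * σ * hb) - q) / r) := by
  set s := Real.exp (σ * hb / 2) with hs
  set u := Real.exp (-σ * r) with hu
  have hspos : 0 < s := Real.exp_pos _
  have hsne : s ≠ 0 := ne_of_gt hspos
  have h1 : Real.exp (-σ * (r + hb)) = u / (s * s) := by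
    rw [show -σ * (r + hb) = (-σ * r) - (σ * hb / 2 + σ * hb / 2) by ring,
      Real.exp_sub, Real.exp_add, ← hu, ← hs]
  have h2 : Real.exp (-σ * (r - hb)) = u * (s * s) := by
    rw [show -σ * (r - hb) = (-σ * r) + (σ * hb / 2 + σ * hb / 2) by ring,
      Real.exp_add, Real.exp_add, ← hu, ← hs]
  have h3 : Real.exp (-σ * (r + 2 * hb)) = u / (s * s * s * s) := by
    rw [show -σ * (r + 2 * hb)
        = (-σ * r) - (σ * hb / 2 + σ * hb / 2 + σ * hb / 2 + σ * hb / 2) by ring,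
      Real.exp_sub, Real.exp_add, Real.exp_add, Real.exp_add, ← hu, ← hs]
  have h4 : Real.exp (-σ * (r - 2 * hb)) = u * (s * s * s * s) := by
    rw [show -σ * (r - 2 * hb)
        = (-σ * r) + (σ * hb / 2 + σ * hb / 2 + σ * hb / 2 + σ * hb / 2) by ring,
      Real.exp_add, Real.exp_add, Real.exp_add, Real.exp_add, ← hu, ← hs]
  have hsh1 : Real.sinh (σ * hb / 2) = (s - 1 / s) / 2 := by
    rw [Real.sinh_eq, Real.exp_neg, ← hs, inv_eq_one_div]
  have hsh2 : Real.sinh (σ * hb) = (s * s - 1 / (s * s)) / 2 := by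
    rw [Real.sinh_eq, Real.exp_neg,
      show σ * hb = σ * hb / 2 + σ * hb / 2 by ring, Real.exp_add, ← hs, inv_eq_one_div]
  have hsh3 : Real.sinh (2 * σ * hb) = (s * s * s * s - 1 / (s * s * s * s)) / 2 := by
    rw [Real.sinh_eq, Real.exp_neg,
      show 2 * σ * hb = σ * hb / 2 + σ * hb / 2 + σ * hb / 2 + σ * hb / 2 by ring,
      Real.exp_add, Real.exp_add, Real.exp_add, ← hs, inv_eq_one_div]
  rw [h1, h2, h3, h4, hsh1, hsh2, hsh3]
  field_simp
  ring

/-- Substituting `φ(r) = e^{-σr}` into the quantum radial Schrödinger equation holds for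
all `r ≠ 0` iff the two relations on `σ` and `E` hold. -/
theorem stmt_13 (a b q E σ hb ξ : ℝ) (hhb : hb ≠ 0) :
    let φ : ℝ → ℝ := fun r => Real.exp (-σ * r)
    (∀ r : ℝ, r ≠ 0 →
        a * E * φ r
          + a * ξ * (φ (r + hb) * (r + hb) + φ (r - hb) * (r - hb) - 2 * r * φ r) / (2 * hb * r)
          + b * ξ ^ 2 * ((φ (r + 2 * hb) - φ (r - 2 * hb)) / (2 * hb * r)
              + (φ (r + 2 * hb) + φ (r - 2 * hb) - 2 * φ r) / (4 * hb ^ 2))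
          + (q / r) * φ r = 0) ↔
    (a * E + (2 * a * ξ / hb) * Real.sinh (σ * hb / 2) ^ 2
        + (b * ξ ^ 2 / hb ^ 2) * Real.sinh (σ * hb) ^ 2 = 0 ∧
      a * ξ * Real.sinh (σ * hb) + (b * ξ ^ 2 / hb) * Real.sinh (2 * σ * hb) - q = 0) := by
  intro φ
  set A := a * E + (2 * a * ξ / hb) * Real.sinh (σ * hb / 2) ^ 2
      + (b * ξ ^ 2 / hb ^ 2) * Real.sinh (σ * hb) ^ 2 with hA
  set B := a * ξ * Real.sinh (σ * hb) + (b * ξ ^ 2 / hb) * Real.sinh (2 * σ * hb) - q with hB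
  have hk : ∀ r : ℝ, r ≠ 0 →
      (a * E * φ r
        + a * ξ * (φ (r + hb) * (r + hb) + φ (r - hb) * (r - hb) - 2 * r * φ r) / (2 * hb * r)
        + b * ξ ^ 2 * ((φ (r + 2 * hb) - φ (r - 2 * hb)) / (2 * hb * r)
            + (φ (r + 2 * hb) + φ (r - 2 * hb) - 2 * φ r) / (4 * hb ^ 2))
        + (q / r) * φ r) = Real.exp (-σ * r) * (A - B / r) := by
    intro r hr
    simpa [φ, hA, hB] using key13 a b q E σ hb ξ r hhb hr
  clear_value A B
  constructor
  · intro h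
    have e1 : Real.exp (-σ * 1) * (A - B / 1) = 0 := by rw [← hk 1 one_ne_zero]; exact h 1 one_ne_zero
    have e2 : Real.exp (-σ * 2) * (A - B / 2) = 0 := by rw [← hk 2 two_ne_zero]; exact h 2 two_ne_zero
    have p1 : A - B / 1 = 0 := by
      rcases mul_eq_zero.mp e1 with h' | h'
      · exact absurd h' (Real.exp_ne_zero _)
      · exact h'
    have p2 : A - B / 2 = 0 := by
      rcases mul_eq_zero.mp e2 with h' | h'
      · exact absurd h' (Real.exp_ne_zero _)
      · exact h'
    rw [div_one] at p1
    have hB0 : B = 0 := by linarith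
    exact ⟨by linarith, hB0⟩
  · rintro ⟨h1, h2⟩ r hr
    rw [hk r hr, h1, h2]
    simp
end

section
/- The system ξ = 2(cosh y - sinh y·q/(2a))/(1 + cosh²y) and ξ² = (aħ/b)(1 - ξ cosh y)/sinh²y in the unknowns ξ and y = σħ reduces to the cubic equation (ω/2 - 2ρ²)T³ + ρ(4-ω)T² - (ω+2)T + 2ρω = 0 in T = tanh y, where ρ = q/(2a) and ω = aħ/b. -/
/-- Eliminating `ξ` from the ground-state system yields the cubic equation in
`T = tanh(σħ)` with coefficients in `ρ = q/(2a)` and `ω = aħ/b`. -/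
theorem stmt_14 (a b q hb y ξ : ℝ) (ha : a ≠ 0) (hbne : b ≠ 0) (hq : q ≠ 0) (hhb : hb ≠ 0)
    (hy : Real.sinh y ≠ 0)
    (h1 : ξ = 2 * (Real.cosh y - Real.sinh y * q / (2 * a)) / (1 + Real.cosh y ^ 2))
    (h2 : ξ ^ 2 = (a * hb / b) * (1 - ξ * Real.cosh y) / Real.sinh y ^ 2) :
    let ρ : ℝ := q / (2 * a)
    let ω : ℝ := a * hb / b
    let T : ℝ := Real.tanh y
    (ω / 2 - 2 * ρ ^ 2) * T ^ 3 + ρ * (4 - ω) * T ^ 2 - (ω + 2) * T + 2 * ρ * ω = 0 := by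
  intro ρ ω T
  set c := Real.cosh y with hc
  set s := Real.sinh y with hs
  have hc2 : c ^ 2 = 1 + s ^ 2 := by rw [hc, hs, Real.cosh_sq']
  have hcne : c ≠ 0 := ne_of_gt (Real.cosh_pos y)
  have hden : (1 : ℝ) + c ^ 2 ≠ 0 := by positivity
  have hT : T = s / c := Real.tanh_eq_sinh_div_cosh y
  have e1 : ξ * (1 + c ^ 2) = 2 * (c - s * ρ) := by
    rw [h1]; simp only [ρ]; field_simp
  have e2 : ξ ^ 2 * s ^ 2 = ω * (1 - ξ * c) := by
    rw [h2]; simp only [ω]; field_simp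
  have e3a : 4 * (c - s * ρ) ^ 2 * s ^ 2
      = ω * (1 + c ^ 2) ^ 2 - 2 * ω * (c - s * ρ) * c * (1 + c ^ 2) := by
    linear_combination (1 + c ^ 2) ^ 2 * e2
      - (s ^ 2 * (ξ * (1 + c ^ 2) + 2 * (c - s * ρ)) + ω * c * (1 + c ^ 2)) * e1
  have e3 : 4 * (c - s * ρ) ^ 2 * s ^ 2 = ω * (1 + c ^ 2) * (2 * c * s * ρ - s ^ 2) := by
    linear_combination e3a - ω * (1 + c ^ 2) * hc2
  have e4 : 4 * (c - s * ρ) ^ 2 * s = ω * (1 + c ^ 2) * (2 * c * ρ - s) := by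
    apply mul_left_cancel₀ hy
    linear_combination e3
  have key : (ω - 4 * ρ ^ 2) * s ^ 3 + 2 * ρ * (4 - ω) * s ^ 2 * c
      - 2 * (ω + 2) * s * c ^ 2 + 4 * ρ * ω * c ^ 3 = 0 := by
    linear_combination (-1) * e4 + (2 * ρ * ω * c - ω * s) * hc2
  rw [hT]
  field_simp
  linear_combination key
end
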